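/- Let d ≥ 1, p ≥ 1, and let f : ℝ^d → ℝ be continuously differentiable with compact support not containing the origin. Then for all 0 < α < d and 0 < β < d, the integral ∫_{ℝ^d} ∫_{ℝ^d} |f(x) − f(y)|^p |x−y|^{−d} |x|^{−α} |y|^{−β} dy dx is finite. -/

import Mathlib

open MeasureTheory Metric Set Filter
open scoped ENNReal NNReal

/-!
Since `f` is Lipschitz and bounded, `|f x - f y| ^ p / ‖x - y‖ ^ d` is dominated by the kernel
`k w = min (L ‖w‖) (2 M) ^ p / ‖w‖ ^ d`, which is locally integrable (as `p > 0`) and decays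
like `‖w‖ ^ (-d)`. The integrand vanishes unless `x` or `y` lies in the support `K`, which stays
at distance `ε` from the origin; by symmetry it suffices to treat `x ∈ K`, where
`‖x‖ ^ (-α) ≤ ε ^ (-α)`. Integrating over `x ∈ K ⊆ closedBall 0 R` first, `∫_K k (x - y) dx` is
bounded for `‖y‖ < 2 R` and is `O(‖y‖ ^ (-d))` beyond, so it remains to integrate `‖y‖ ^ (-β)`
over a ball (finite as `β < d`) and `‖y‖ ^ (-d - β)` outside it (finite as `β > 0`).
-/

section SplitSupport

variable {X : Type*} [MeasurableSpace X] {μ : Measure X} [SFinite μ]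

theorem lintegral_lintegral_le_setLIntegral_add_of_eq_zero {F : X → X → ℝ≥0∞}
    (hF : Measurable (Function.uncurry F)) {s : Set X}
    (hF_zero : ∀ x ∉ s, ∀ y ∉ s, F x y = 0) :
    ∫⁻ x, ∫⁻ y, F x y ∂μ ∂μ
      ≤ ∫⁻ x in s, ∫⁻ y, F x y ∂μ ∂μ + ∫⁻ y in s, ∫⁻ x, F x y ∂μ ∂μ := by
  have hsupp : (Function.uncurry F).support ⊆ s ×ˢ univ ∪ univ ×ˢ s := by
    rintro ⟨x, y⟩ hxy
    by_contra h
    simp only [mem_union, mem_prod, mem_univ, and_true, true_and, not_or] at h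
    exact hxy (hF_zero x h.1 y h.2)
  calc ∫⁻ x, ∫⁻ y, F x y ∂μ ∂μ
      = ∫⁻ z in s ×ˢ univ ∪ univ ×ˢ s, Function.uncurry F z ∂μ.prod μ := by
        rw [setLIntegral_eq_of_support_subset hsupp, lintegral_prod _ hF.aemeasurable]
        rfl
    _ ≤ ∫⁻ z in s ×ˢ univ, Function.uncurry F z ∂μ.prod μ
        + ∫⁻ z in univ ×ˢ s, Function.uncurry F z ∂μ.prod μ := lintegral_union_le _ _ _
    _ = ∫⁻ x in s, ∫⁻ y, F x y ∂μ ∂μ + ∫⁻ y in s, ∫⁻ x, F x y ∂μ ∂μ := by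
        rw [← Measure.prod_restrict, ← Measure.prod_restrict, Measure.restrict_univ,
          lintegral_prod _ hF.aemeasurable, lintegral_prod _ hF.aemeasurable]
        exact congrArg _ (lintegral_lintegral_swap hF.aemeasurable)

end SplitSupport

section NormedGroup

variable {E : Type*} [NormedAddCommGroup E]

theorem IsClosed.exists_pos_forall_le_norm {K : Set E} (hK : IsClosed K) (h0 : (0 : E) ∉ K) :
    ∃ ε > 0, ∀ x ∈ K, ε ≤ ‖x‖ := by
  obtain ⟨ε, hε, hball⟩ := Metric.isOpen_iff.1 hK.isOpen_compl 0 h0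
  exact ⟨ε, hε, fun x hx => not_lt.1 fun h => hball (mem_ball_zero_iff.2 h) hx⟩

variable [MeasurableSpace E] {μ : Measure E}

theorem setLIntegral_comp_sub_right_le_of_le_norm {g : E → ℝ≥0∞} {C : ℝ≥0∞} {t : ℝ} (ht : 0 ≤ t)
    (hg_decay : ∀ w, g w ≤ C * ENNReal.ofReal (‖w‖ ^ (-t))) {K : Set E} {R : ℝ} (hR : 0 < R)
    (hKR : K ⊆ closedBall 0 R) {y : E} (hy : 2 * R ≤ ‖y‖) :
    ∫⁻ x in K, g (x - y) ∂μ ≤ C * ENNReal.ofReal (2 ^ t * ‖y‖ ^ (-t)) * μ K := by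
  have hfar : ∀ x ∈ K, ‖x - y‖ ^ (-t) ≤ 2 ^ t * ‖y‖ ^ (-t) := fun x hx => by
    have hxR := mem_closedBall_zero_iff.1 (hKR hx)
    have hxy : ‖y‖ / 2 ≤ ‖x - y‖ := by
      rw [norm_sub_rev]; linarith [norm_sub_norm_le y x]
    calc ‖x - y‖ ^ (-t) ≤ (‖y‖ / 2) ^ (-t) :=
          Real.rpow_le_rpow_of_nonpos (by linarith) hxy (neg_nonpos.2 ht)
      _ = 2 ^ t * ‖y‖ ^ (-t) := by
          rw [Real.div_rpow (norm_nonneg y) zero_le_two, Real.rpow_neg zero_le_two,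
            div_inv_eq_mul, mul_comm]
  calc ∫⁻ x in K, g (x - y) ∂μ ≤ ∫⁻ _ in K, C * ENNReal.ofReal (2 ^ t * ‖y‖ ^ (-t)) ∂μ :=
        setLIntegral_mono measurable_const fun x hx =>
          (hg_decay _).trans (mul_le_mul_right (ENNReal.ofReal_le_ofReal (hfar x hx)) C)
    _ = C * ENNReal.ofReal (2 ^ t * ‖y‖ ^ (-t)) * μ K := setLIntegral_const _ _

theorem setLIntegral_comp_sub_right_le_of_norm_lt [BorelSpace E] [μ.IsAddRightInvariant]
    {g : E → ℝ≥0∞} (hg : Measurable g) {K : Set E} {R : ℝ} (hKR : K ⊆ closedBall 0 R) {y : E}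
    (hy : ‖y‖ < 2 * R) :
    ∫⁻ x in K, g (x - y) ∂μ ≤ ∫⁻ w in ball 0 (3 * R), g w ∂μ := by
  have hclose : ∀ x ∈ K, x - y ∈ ball (0 : E) (3 * R) := fun x hx => by
    have := mem_closedBall_zero_iff.1 (hKR hx)
    rw [mem_ball_zero_iff]
    linarith [norm_sub_le x y]
  calc ∫⁻ x in K, g (x - y) ∂μ ≤ ∫⁻ x in K, (ball 0 (3 * R)).indicator g (x - y) ∂μ :=
        setLIntegral_mono ((hg.indicator measurableSet_ball).comp (measurable_sub_const y))
          fun x hx => (indicator_of_mem (hclose x hx) g).ge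
    _ ≤ ∫⁻ x, (ball 0 (3 * R)).indicator g (x - y) ∂μ := setLIntegral_le_lintegral _ _
    _ = ∫⁻ w in ball 0 (3 * R), g w ∂μ := by
        rw [lintegral_sub_right_eq_self, lintegral_indicator measurableSet_ball]

end NormedGroup

section Kernels

variable {E : Type*} [NormedAddCommGroup E] [NormedSpace ℝ E]

noncomputable def lipschitzKernel (L : ℝ≥0) (M p : ℝ) (w : E) : ℝ≥0∞ :=
  ENNReal.ofReal (min (L * ‖w‖) M ^ p / ‖w‖ ^ (Module.finrank ℝ E : ℝ))

theorem lipschitzKernel_le {L : ℝ≥0} {M p : ℝ} (hM : 0 ≤ M) (hp : 0 ≤ p) (w : E) :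
    lipschitzKernel L M p w
      ≤ ENNReal.ofReal (M ^ p) * ENNReal.ofReal (‖w‖ ^ (-(Module.finrank ℝ E : ℝ))) := by
  rw [lipschitzKernel, ← ENNReal.ofReal_mul (by positivity), Real.rpow_neg (norm_nonneg w),
    ← div_eq_mul_inv]
  gcongr
  exact min_le_right _ _

noncomputable def weightedGagliardoKernel (f : E → ℝ) (p α β : ℝ) (x y : E) : ℝ≥0∞ :=
  ENNReal.ofReal
    (|f x - f y| ^ p / ‖x - y‖ ^ (Module.finrank ℝ E : ℝ) * ‖x‖ ^ (-α) * ‖y‖ ^ (-β))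

theorem weightedGagliardoKernel_comm (f : E → ℝ) (p α β : ℝ) (x y : E) :
    weightedGagliardoKernel f p α β x y = weightedGagliardoKernel f p β α y x := by
  rw [weightedGagliardoKernel, weightedGagliardoKernel, abs_sub_comm, norm_sub_rev, mul_assoc,
    mul_assoc, mul_comm (‖x‖ ^ (-α))]

theorem weightedGagliardoKernel_eq_zero {f : E → ℝ} {p : ℝ} (hp : p ≠ 0) (α β : ℝ) {x y : E}
    (hx : f x = 0) (hy : f y = 0) : weightedGagliardoKernel f p α β x y = 0 := by
  simp [weightedGagliardoKernel, hx, hy, Real.zero_rpow hp]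

theorem weightedGagliardoKernel_le {f : E → ℝ} {L : ℝ≥0} {M : ℝ} (hf : LipschitzWith L f)
    (hfM : ∀ x, ‖f x‖ ≤ M) {p : ℝ} (hp : 0 ≤ p) {α : ℝ} (hα : 0 ≤ α) (β : ℝ) {ε : ℝ}
    (hε : 0 < ε) {x : E} (hx : ε ≤ ‖x‖) (y : E) :
    weightedGagliardoKernel f p α β x y
      ≤ ENNReal.ofReal (ε ^ (-α))
        * (lipschitzKernel L (2 * M) p (x - y) * ENNReal.ofReal (‖y‖ ^ (-β))) := by
  have hdiff : |f x - f y| ≤ min (L * ‖x - y‖) (2 * M) := le_min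
    (by simpa [Real.dist_eq, dist_eq_norm] using hf.dist_le_mul x y)
    (by linarith [abs_sub (f x) (f y), hfM x, hfM y, Real.norm_eq_abs (f x),
      Real.norm_eq_abs (f y)])
  have hweight : ‖x‖ ^ (-α) ≤ ε ^ (-α) := Real.rpow_le_rpow_of_nonpos hε hx (neg_nonpos.2 hα)
  have hkernel : 0 ≤ min (L * ‖x - y‖) (2 * M) ^ p / ‖x - y‖ ^ (Module.finrank ℝ E : ℝ) :=
    div_nonneg (Real.rpow_nonneg ((abs_nonneg _).trans hdiff) p) (by positivity)
  rw [lipschitzKernel, ← ENNReal.ofReal_mul hkernel, ← ENNReal.ofReal_mul (by positivity),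
    weightedGagliardoKernel]
  refine ENNReal.ofReal_le_ofReal ?_
  calc |f x - f y| ^ p / ‖x - y‖ ^ (Module.finrank ℝ E : ℝ) * ‖x‖ ^ (-α) * ‖y‖ ^ (-β)
      ≤ min (L * ‖x - y‖) (2 * M) ^ p / ‖x - y‖ ^ (Module.finrank ℝ E : ℝ) * ε ^ (-α)
          * ‖y‖ ^ (-β) := by gcongr
    _ = _ := by ring

end Kernels

section HaarMeasure

variable {E : Type*} [NormedAddCommGroup E] [NormedSpace ℝ E] [FiniteDimensional ℝ E]
  [MeasurableSpace E] [BorelSpace E] {μ : Measure E} [μ.IsAddHaarMeasure]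

theorem lintegral_ball_rpow_norm_lt_top [Nontrivial E] {γ : ℝ}
    (hγ : γ < Module.finrank ℝ E) (r : ℝ) :
    ∫⁻ y in ball (0 : E) r, ENNReal.ofReal (‖y‖ ^ (-γ)) ∂μ < ∞ :=
  Integrable.lintegral_lt_top <|
    integrableOn_ball_of_norm_le_rpow (C := 1) Module.finrank_pos hγ
      (ae_of_all _ fun y => by simp [abs_of_nonneg (Real.rpow_nonneg (norm_nonneg y) _)])
      (measurable_norm.pow_const _).aestronglyMeasurable

theorem lintegral_compl_ball_rpow_norm_lt_top {s r : ℝ} (hs : Module.finrank ℝ E < s)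
    (hr : 0 < r) :
    ∫⁻ y in (ball (0 : E) r)ᶜ, ENNReal.ofReal (‖y‖ ^ (-s)) ∂μ < ∞ := by
  set c : ℝ := (1 + r) / r
  have hs0 : 0 ≤ s := (Nat.cast_nonneg _).trans hs.le
  have hbound : ∀ y ∈ (ball (0 : E) r)ᶜ, ‖y‖ ^ (-s) ≤ c ^ s * (1 + ‖y‖) ^ (-s) := by
    intro y hy
    have hry : r ≤ ‖y‖ := by simpa using hy
    have hy0 : 0 < ‖y‖ := hr.trans_le hry
    have hc : 1 + ‖y‖ ≤ c * ‖y‖ := by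
      rw [div_mul_eq_mul_div, le_div_iff₀ hr]; nlinarith
    calc ‖y‖ ^ (-s) = c ^ s * (c * ‖y‖) ^ (-s) := by
          rw [Real.mul_rpow (by positivity) hy0.le, ← mul_assoc, ← Real.rpow_add (by positivity),
            add_neg_cancel, Real.rpow_zero, one_mul]
      _ ≤ c ^ s * (1 + ‖y‖) ^ (-s) := mul_le_mul_of_nonneg_left
          (Real.rpow_le_rpow_of_nonpos (by positivity) hc (neg_nonpos.2 hs0)) (by positivity)
  calc ∫⁻ y in (ball (0 : E) r)ᶜ, ENNReal.ofReal (‖y‖ ^ (-s)) ∂μ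
      ≤ ∫⁻ y in (ball (0 : E) r)ᶜ,
          ENNReal.ofReal (c ^ s) * ENNReal.ofReal ((1 + ‖y‖) ^ (-s)) ∂μ :=
        setLIntegral_mono' measurableSet_ball.compl fun y hy => by
          rw [← ENNReal.ofReal_mul (by positivity)]; exact ENNReal.ofReal_le_ofReal (hbound y hy)
    _ ≤ ENNReal.ofReal (c ^ s) * ∫⁻ y, ENNReal.ofReal ((1 + ‖y‖) ^ (-s)) ∂μ := by
        rw [lintegral_const_mul' _ _ ENNReal.ofReal_ne_top]
        exact mul_le_mul_right (setLIntegral_le_lintegral _ _) _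
    _ < ∞ := ENNReal.mul_lt_top ENNReal.ofReal_lt_top (finite_integral_one_add_norm hs)

theorem setLIntegral_lintegral_sub_mul_rpow_norm_lt_top [Nontrivial E] {g : E → ℝ≥0∞}
    (hg : Measurable g) (hg_loc : ∀ r, ∫⁻ w in ball 0 r, g w ∂μ < ∞) {C : ℝ≥0∞} (hC : C ≠ ∞)
    {t : ℝ} (ht : 0 ≤ t) (hg_decay : ∀ w, g w ≤ C * ENNReal.ofReal (‖w‖ ^ (-t)))
    {K : Set E} (hK : IsCompact K) {γ : ℝ} (hγ : γ < Module.finrank ℝ E)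
    (hγt : Module.finrank ℝ E < γ + t) :
    ∫⁻ x in K, ∫⁻ y, g (x - y) * ENNReal.ofReal (‖y‖ ^ (-γ)) ∂μ ∂μ < ∞ := by
  obtain ⟨R, hR, hKR⟩ := hK.isBounded.subset_closedBall_lt 0 0
  set A := ∫⁻ w in ball 0 (3 * R), g w ∂μ
  set B := C * ENNReal.ofReal (2 ^ t) * μ K
  have hbound : ∀ y, (∫⁻ x in K, g (x - y) ∂μ) * ENNReal.ofReal (‖y‖ ^ (-γ))
      ≤ (ball 0 (2 * R)).indicator (fun y => A * ENNReal.ofReal (‖y‖ ^ (-γ))) y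
        + (ball 0 (2 * R))ᶜ.indicator (fun y => B * ENNReal.ofReal (‖y‖ ^ (-(γ + t)))) y := by
    intro y
    by_cases hy : ‖y‖ < 2 * R
    · rw [indicator_of_mem (mem_ball_zero_iff.2 hy)]
      exact le_add_right
        (mul_le_mul_left (setLIntegral_comp_sub_right_le_of_norm_lt hg hKR hy) _)
    · have hy0 : 0 < ‖y‖ := by linarith
      rw [indicator_of_mem (by simpa using hy : y ∈ (ball (0 : E) (2 * R))ᶜ)]
      refine le_add_left ((mul_le_mul_left
        (setLIntegral_comp_sub_right_le_of_le_norm ht hg_decay hR hKR (not_lt.1 hy)) _).trans_eq ?_)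
      rw [ENNReal.ofReal_mul (by positivity), neg_add, Real.rpow_add hy0,
        ENNReal.ofReal_mul (by positivity)]
      ring
  calc ∫⁻ x in K, ∫⁻ y, g (x - y) * ENNReal.ofReal (‖y‖ ^ (-γ)) ∂μ ∂μ
      = ∫⁻ y, (∫⁻ x in K, g (x - y) ∂μ) * ENNReal.ofReal (‖y‖ ^ (-γ)) ∂μ := by
        rw [lintegral_lintegral_swap (by fun_prop)]
        exact lintegral_congr fun y => lintegral_mul_const _ (hg.comp (measurable_sub_const y))
    _ ≤ ∫⁻ y, ((ball 0 (2 * R)).indicator (fun y => A * ENNReal.ofReal (‖y‖ ^ (-γ))) y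
        + (ball 0 (2 * R))ᶜ.indicator (fun y => B * ENNReal.ofReal (‖y‖ ^ (-(γ + t)))) y) ∂μ :=
        lintegral_mono hbound
    _ = A * ∫⁻ y in ball 0 (2 * R), ENNReal.ofReal (‖y‖ ^ (-γ)) ∂μ
        + B * ∫⁻ y in (ball 0 (2 * R))ᶜ, ENNReal.ofReal (‖y‖ ^ (-(γ + t))) ∂μ := by
        rw [lintegral_add_left (Measurable.indicator (by fun_prop) measurableSet_ball),
          lintegral_indicator measurableSet_ball, lintegral_indicator measurableSet_ball.compl,
          lintegral_const_mul _ (by fun_prop), lintegral_const_mul _ (by fun_prop)]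
    _ < ∞ := ENNReal.add_lt_top.2
        ⟨ENNReal.mul_lt_top (hg_loc _) (lintegral_ball_rpow_norm_lt_top hγ _),
          ENNReal.mul_lt_top (ENNReal.mul_lt_top (ENNReal.mul_lt_top hC.lt_top
            ENNReal.ofReal_lt_top) hK.measure_lt_top)
            (lintegral_compl_ball_rpow_norm_lt_top hγt (by positivity))⟩

theorem lintegral_ball_lipschitzKernel_lt_top [Nontrivial E] (L : ℝ≥0) {M p : ℝ} (hM : 0 ≤ M)
    (hp : 0 < p) (r : ℝ) : ∫⁻ w in ball (0 : E) r, lipschitzKernel L M p w ∂μ < ∞ := by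
  have hn : (Module.finrank ℝ E : ℝ) ≠ 0 := Nat.cast_ne_zero.2 Module.finrank_pos.ne'
  have hbound : ∀ w : E, lipschitzKernel L M p w
      ≤ ENNReal.ofReal (L ^ p) * ENNReal.ofReal (‖w‖ ^ (-(Module.finrank ℝ E - p))) := by
    intro w
    rcases eq_or_ne w 0 with rfl | hw
    · simp [lipschitzKernel, Real.zero_rpow hn]
    have hw0 : 0 < ‖w‖ := norm_pos_iff.2 hw
    rw [lipschitzKernel, ← ENNReal.ofReal_mul (by positivity)]
    refine ENNReal.ofReal_le_ofReal ?_
    calc min (L * ‖w‖) M ^ p / ‖w‖ ^ (Module.finrank ℝ E : ℝ)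
        ≤ (L * ‖w‖) ^ p / ‖w‖ ^ (Module.finrank ℝ E : ℝ) := by
          gcongr
          exact min_le_left _ _
      _ = L ^ p * ‖w‖ ^ (-(Module.finrank ℝ E - p)) := by
          rw [Real.mul_rpow L.coe_nonneg hw0.le, neg_sub, Real.rpow_sub hw0, mul_div_assoc]
  calc ∫⁻ w in ball (0 : E) r, lipschitzKernel L M p w ∂μ
      ≤ ∫⁻ w in ball (0 : E) r,
          ENNReal.ofReal (L ^ p) * ENNReal.ofReal (‖w‖ ^ (-(Module.finrank ℝ E - p))) ∂μ :=
        lintegral_mono fun w => hbound w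
    _ < ∞ := by
        rw [lintegral_const_mul _ (by fun_prop)]
        exact ENNReal.mul_lt_top ENNReal.ofReal_lt_top
          (lintegral_ball_rpow_norm_lt_top (by linarith) r)

theorem setLIntegral_lintegral_weightedGagliardoKernel_lt_top [Nontrivial E] {f : E → ℝ}
    {L : ℝ≥0} {M : ℝ} (hf : LipschitzWith L f) (hfM : ∀ x, ‖f x‖ ≤ M) {p : ℝ} (hp : 0 < p)
    {K : Set E} (hK : IsCompact K) {ε : ℝ} (hε : 0 < ε) (hKε : ∀ x ∈ K, ε ≤ ‖x‖) {α β : ℝ}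
    (hα : 0 ≤ α) (hβ : 0 < β) (hβ' : β < Module.finrank ℝ E) :
    ∫⁻ x in K, ∫⁻ y, weightedGagliardoKernel f p α β x y ∂μ ∂μ < ∞ := by
  have hM : 0 ≤ 2 * M := by linarith [(norm_nonneg _).trans (hfM 0)]
  have hconv := setLIntegral_lintegral_sub_mul_rpow_norm_lt_top (μ := μ)
    (by unfold lipschitzKernel; fun_prop) (lintegral_ball_lipschitzKernel_lt_top L hM hp)
    ENNReal.ofReal_ne_top (Nat.cast_nonneg _) (lipschitzKernel_le hM hp.le) hK hβ' (by linarith)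
  calc ∫⁻ x in K, ∫⁻ y, weightedGagliardoKernel f p α β x y ∂μ ∂μ
      ≤ ∫⁻ x in K, ENNReal.ofReal (ε ^ (-α))
          * ∫⁻ y, lipschitzKernel L (2 * M) p (x - y) * ENNReal.ofReal (‖y‖ ^ (-β)) ∂μ ∂μ :=
        setLIntegral_mono' hK.measurableSet fun x hx =>
          (lintegral_mono (weightedGagliardoKernel_le hf hfM hp.le hα β hε (hKε x hx))).trans_eq
            (lintegral_const_mul' _ _ ENNReal.ofReal_ne_top)
    _ < ∞ := by
        rw [lintegral_const_mul' _ _ ENNReal.ofReal_ne_top]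
        exact ENNReal.mul_lt_top ENNReal.ofReal_lt_top hconv

end HaarMeasure

/-- Finiteness of the weighted Gagliardo seminorm `[f]_{W^{0,p}_{α,β}(ℝ^d)}^p` for
`f ∈ C_c¹` with support avoiding the origin and `0 < α, β < d`. -/
theorem gagliardo_zero_order_finite
    (d : ℕ) (hd : 1 ≤ d) (p : ℝ) (hp : 1 ≤ p)
    (f : EuclideanSpace ℝ (Fin d) → ℝ) (hf : ContDiff ℝ 1 f)
    (hfc : HasCompactSupport f) (hsupp : (0 : EuclideanSpace ℝ (Fin d)) ∉ tsupport f)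
    (α β : ℝ) (hα : 0 < α) (hα' : α < d) (hβ : 0 < β) (hβ' : β < d) :
    (∫⁻ x : EuclideanSpace ℝ (Fin d), ∫⁻ y : EuclideanSpace ℝ (Fin d),
      ENNReal.ofReal
        (|f x - f y| ^ p / ‖x - y‖ ^ (d : ℝ) * ‖x‖ ^ (-α) * ‖y‖ ^ (-β))) ≠ ⊤ := by
  have hp0 : 0 < p := zero_lt_one.trans_le hp
  have : Nontrivial (EuclideanSpace ℝ (Fin d)) :=
    Module.nontrivial_of_finrank_pos (R := ℝ) (by rw [finrank_euclideanSpace_fin]; exact hd)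
  obtain ⟨L, hL⟩ := hf.lipschitzWith_of_hasCompactSupport hfc one_ne_zero
  obtain ⟨M, hM⟩ := hf.continuous.bounded_above_of_compact_support hfc
  obtain ⟨ε, hε, hKε⟩ := (isClosed_tsupport f).exists_pos_forall_le_norm hsupp
  have hf_meas : Measurable f := hf.continuous.measurable
  have hsplit := lintegral_lintegral_le_setLIntegral_add_of_eq_zero (μ := volume)
    (by unfold weightedGagliardoKernel; fun_prop :
      Measurable (Function.uncurry (weightedGagliardoKernel f p α β)))
    fun x hx y hy => weightedGagliardoKernel_eq_zero hp0.ne' α β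
      (image_eq_zero_of_notMem_tsupport hx) (image_eq_zero_of_notMem_tsupport hy)
  have hK := hfc.isCompact
  have hfirst := setLIntegral_lintegral_weightedGagliardoKernel_lt_top (μ := volume) hL hM hp0
    hK hε hKε hα.le hβ (by rwa [finrank_euclideanSpace_fin])
  have hsecond : ∫⁻ y in tsupport f, ∫⁻ x, weightedGagliardoKernel f p α β x y < ∞ := by
    simpa only [weightedGagliardoKernel_comm f p α β] using
      setLIntegral_lintegral_weightedGagliardoKernel_lt_top (μ := volume) hL hM hp0 hK hε hKε
        hβ.le hα (by rwa [finrank_euclideanSpace_fin])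
  refine (lt_of_eq_of_lt ?_ (hsplit.trans_lt (ENNReal.add_lt_top.2 ⟨hfirst, hsecond⟩))).ne
  simp only [weightedGagliardoKernel, finrank_euclideanSpace_fin]
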